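/- arXiv:2012.13770 — 4 statements merged into one kernel-verified Lean document; each statement's English description precedes it below -/
import Mathlib

section
/- Let ε₀ := α, C₁ := 1/(3√3·α), and let 0 < ε < min(ε₀, 1/(3C₁)). If f ∈ C(M;ℝⁿ) is a minimizer of F_ε over some class A ⊆ C(M;ℝⁿ) of maps that contains at least one rigid translation x ↦ x + b (b ∈ ℝⁿ), then (1 − 3C₁ε)·d_M(x,y) ≤ |f(x) − f(y)| ≤ (1 + 3C₁ε)·d_M(x,y) whenever x, y ∈ M satisfy d_M(x,y) < ε. The same conclusion holds for all x, y ∈ Σ_k with d_M(x,y) < ε when f is a minimizer of F_{ε,k} over a class containing a rigid translation. -/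
open Set Metric Filter Topology ENNReal

noncomputable section

abbrev E (n : ℕ) := EuclideanSpace ℝ (Fin n)

/-- Length of a curve: its total variation on `[0,1]`. -/
def curveLen {n : ℕ} (θ : ℝ → E n) : ℝ≥0∞ := eVariationOn θ (Set.Icc (0 : ℝ) 1)

/-- Intrinsic (geodesic) distance of a set `A ⊆ ℝⁿ`, with values in `[0,∞]`:
the infimum of lengths of continuous (rectifiable) curves in `A` joining the two points. -/
def intrinsicDistE {n : ℕ} (A : Set (E n)) (u v : E n) : ℝ≥0∞ :=
  ⨅ (θ : ℝ → E n) (_ : ContinuousOn θ (Set.Icc 0 1)) (_ : Set.MapsTo θ (Set.Icc 0 1) A)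
    (_ : θ 0 = u) (_ : θ 1 = v), curveLen θ

/-- Real-valued intrinsic (geodesic) distance. -/
def intrinsicDist {n : ℕ} (A : Set (E n)) (u v : E n) : ℝ :=
  (intrinsicDistE A u v).toReal

/-- Federer's reach of `M`: the supremum of `ε > 0` such that every point of the open
`ε`-neighborhood of `M` has a unique nearest point on `M`. -/
def reach {n : ℕ} (M : Set (E n)) : ℝ :=
  sSup {ε : ℝ | 0 < ε ∧ ∀ x ∈ Metric.thickening ε M,
    ∃! y, y ∈ M ∧ dist x y = Metric.infDist x M}

/-- `M` is a smooth embedded submanifold of `ℝⁿ` (local smooth injective immersive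
parametrizations of a fixed dimension). -/
def IsSmoothSubmanifold {n : ℕ} (M : Set (E n)) : Prop :=
  ∃ d : ℕ, ∀ x ∈ M,
    ∃ (U : Set (E n)) (V : Set (EuclideanSpace ℝ (Fin d)))
      (ψ : EuclideanSpace ℝ (Fin d) → E n),
      IsOpen U ∧ x ∈ U ∧ IsOpen V ∧ ContDiffOn ℝ (⊤ : ℕ∞) ψ V ∧ Set.InjOn ψ V ∧
      ψ '' V = M ∩ U ∧ ∀ v ∈ V, Function.Injective (fderiv ℝ ψ v)

/-- The functional `F_ε^S(f) = sup{ ||f(x)−f(y)|²/d_M(x,y)² − 1| : x, y ∈ S,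
0 < d_M(x,y) ≤ ε }`, with values in `[0,∞]`. -/
def Ffun {n : ℕ} (M S : Set (E n)) (ε : ℝ) (f : E n → E n) : ℝ≥0∞ :=
  ⨆ (x : E n) (y : E n) (_ : x ∈ S) (_ : y ∈ S)
    (_ : 0 < intrinsicDist M x y) (_ : intrinsicDist M x y ≤ ε),
    ENNReal.ofReal |‖f x - f y‖ ^ 2 / (intrinsicDist M x y) ^ 2 - 1|

set_option maxHeartbeats 1000000 in
lemma key_lemma {n : ℕ} (M S : Set (E n)) (hS : S ⊆ M)
    (α C₁ ε : ℝ) (hC₁pos : 0 < C₁) (hε : 0 < ε) (hεα : ε < α) (hεC : ε < 1 / (3 * C₁))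
    (hA1 : ∀ x ∈ M, ∀ y ∈ M, intrinsicDist M x y < α →
      dist x y ≤ intrinsicDist M x y ∧
      intrinsicDist M x y ≤ (1 + C₁ * dist x y) * dist x y) :
    ∀ A : Set (E n → E n), (∀ g ∈ A, ContinuousOn g M) →
      (∃ b : E n, (fun x => x + b) ∈ A) →
      ∀ f ∈ A, (∀ g ∈ A, Ffun M S ε f ≤ Ffun M S ε g) →
      ∀ x ∈ S, ∀ y ∈ S, intrinsicDist M x y < ε →
        (1 - 3 * C₁ * ε) * intrinsicDist M x y ≤ ‖f x - f y‖ ∧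
        ‖f x - f y‖ ≤ (1 + 3 * C₁ * ε) * intrinsicDist M x y := by
  intro A _hcont hbex f hfA hmin x hx y hy hdlt
  obtain ⟨b, hbA⟩ := hbex
  have hCε : 3 * C₁ * ε < 1 := by
    have := (lt_div_iff₀ (by positivity : (0:ℝ) < 3 * C₁)).mp hεC
    linarith
  -- bound F on the translation g
  have hgbound : Ffun M S ε (fun x => x + b) ≤ ENNReal.ofReal (2 * C₁ * ε) := by
    refine iSup_le fun u => iSup_le fun v => iSup_le fun hu => iSup_le fun hv =>
      iSup_le fun hd0 => iSup_le fun hdε => ?_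
    apply ENNReal.ofReal_le_ofReal
    have huv : (u + b) - (v + b) = u - v := by abel
    rw [huv, ← dist_eq_norm]
    set d := intrinsicDist M u v with hd
    set t := dist u v with ht
    obtain ⟨h1, h2⟩ := hA1 u (hS hu) v (hS hv) (lt_of_le_of_lt hdε hεα)
    have ht0 : 0 ≤ t := dist_nonneg
    have hd2 : (0:ℝ) < d ^ 2 := by positivity
    have hq : t ^ 2 / d ^ 2 * d ^ 2 = t ^ 2 := by field_simp
    have hCd : C₁ * d ≤ C₁ * ε := by nlinarith
    have hCd3 : C₁ * d < 1 / 3 := by nlinarith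
    -- lower bound on t : t ≥ d - C₁ d²
    have htlb : d - C₁ * d ^ 2 ≤ t := by nlinarith [mul_le_mul_of_nonneg_left h1 (mul_nonneg hC₁pos.le ht0)]
    have htlb0 : 0 ≤ d - C₁ * d ^ 2 := by nlinarith
    have ht2 : (1 - 2 * C₁ * ε) * d ^ 2 ≤ t ^ 2 := by nlinarith [sq_nonneg (d - C₁ * d^2), mul_le_mul_of_nonneg_left hCd hd0.le]
    have hqle : t ^ 2 / d ^ 2 ≤ 1 := by
      rw [div_le_one hd2]; nlinarith
    have hqge : 1 - 2 * C₁ * ε ≤ t ^ 2 / d ^ 2 := (le_div_iff₀ hd2).mpr ht2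
    rw [abs_le]
    constructor
    · linarith
    · have h2C : (0:ℝ) < 2 * C₁ * ε := by positivity
      linarith
  -- extract the pointwise bound for f
  rcases eq_or_lt_of_le (show (0:ℝ) ≤ intrinsicDist M x y from by
      have := (hA1 x (hS hx) y (hS hy) (hdlt.trans hεα)).1
      exact le_trans dist_nonneg this) with hd0 | hd0
  · -- d = 0 : then x = y
    have hxy : x = y := by
      have h := (hA1 x (hS hx) y (hS hy) (hdlt.trans hεα)).1
      have : dist x y ≤ 0 := by rw [← hd0] at h; exact h
      exact dist_le_zero.mp this
    subst hxy
    simp [← hd0]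
  · -- d > 0 : use the supremum bound
    set d := intrinsicDist M x y with hdd
    set r := ‖f x - f y‖ with hr
    have hterm : ENNReal.ofReal |r ^ 2 / d ^ 2 - 1| ≤ Ffun M S ε f := by
      exact le_iSup_of_le x (le_iSup_of_le y (le_iSup_of_le hx (le_iSup_of_le hy
        (le_iSup_of_le hd0 (le_iSup_of_le hdlt.le le_rfl)))))
    have hle : ENNReal.ofReal |r ^ 2 / d ^ 2 - 1| ≤ ENNReal.ofReal (2 * C₁ * ε) :=
      le_trans hterm (le_trans (hmin _ hbA) hgbound)
    have habs : |r ^ 2 / d ^ 2 - 1| ≤ 2 * C₁ * ε := by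
      have := (ENNReal.ofReal_le_ofReal_iff (by positivity)).mp hle
      exact this
    rw [abs_le] at habs
    obtain ⟨hlo, hhi⟩ := habs
    have hd2 : (0:ℝ) < d ^ 2 := by positivity
    have hr0 : 0 ≤ r := norm_nonneg _
    have hru : r ^ 2 ≤ (1 + 2 * C₁ * ε) * d ^ 2 := by
      have : r ^ 2 / d ^ 2 ≤ 1 + 2 * C₁ * ε := by linarith
      calc r ^ 2 = r ^ 2 / d ^ 2 * d ^ 2 := by field_simp
        _ ≤ (1 + 2 * C₁ * ε) * d ^ 2 := by
            exact mul_le_mul_of_nonneg_right this hd2.le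
    have hrl : (1 - 2 * C₁ * ε) * d ^ 2 ≤ r ^ 2 := by
      have : 1 - 2 * C₁ * ε ≤ r ^ 2 / d ^ 2 := by linarith
      calc (1 - 2 * C₁ * ε) * d ^ 2 ≤ r ^ 2 / d ^ 2 * d ^ 2 :=
            mul_le_mul_of_nonneg_right this hd2.le
        _ = r ^ 2 := by field_simp
    have hCεpos : 0 < C₁ * ε := mul_pos hC₁pos hε
    have hs0 : 0 ≤ (1 - 3 * C₁ * ε) * d := mul_nonneg (by linarith) hd0.le
    have hs0' : 0 ≤ (1 + 3 * C₁ * ε) * d := mul_nonneg (by linarith) hd0.le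
    have hco1 : (1 - 3 * C₁ * ε) ^ 2 ≤ 1 - 2 * C₁ * ε := by nlinarith
    have hco2 : 1 + 2 * C₁ * ε ≤ (1 + 3 * C₁ * ε) ^ 2 := by nlinarith
    constructor
    · have hsq : ((1 - 3 * C₁ * ε) * d) ^ 2 ≤ r ^ 2 := by
        rw [mul_pow]
        exact le_trans (mul_le_mul_of_nonneg_right hco1 hd2.le) hrl
      exact (pow_le_pow_iff_left₀ hs0 hr0 two_ne_zero).mp hsq
    · have hsq : r ^ 2 ≤ ((1 + 3 * C₁ * ε) * d) ^ 2 := by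
        rw [mul_pow]
        exact le_trans hru (mul_le_mul_of_nonneg_right hco2 hd2.le)
      exact (pow_le_pow_iff_left₀ hr0 hs0' two_ne_zero).mp hsq

/-- Minimizers of `F_ε` over a class containing a rigid translation are local almost
isometries: if `0 < ε < min(α, 1/(3C₁))` and `f` minimizes `F_ε` (resp. `F_{ε,k}`) over a
class `A` of continuous maps containing a translation `x ↦ x + b`, then
`(1 − 3C₁ε)·d_M(x,y) ≤ |f(x) − f(y)| ≤ (1 + 3C₁ε)·d_M(x,y)` whenever `d_M(x,y) < ε`, for
`x, y ∈ M` (resp. `x, y ∈ Σ_k`). Lemma A.1, valid in this setting, is recorded as the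
hypothesis `hA1`. -/
theorem minimizer_is_local_almost_isometry {n : ℕ} (M : Set (E n))
    (hsm : IsSmoothSubmanifold M) (hconn : IsConnected M) (hcomp : IsCompact M)
    (α : ℝ) (hα : α = reach M) (hαpos : 0 < α)
    (C₁ : ℝ) (hC₁ : C₁ = 1 / (3 * Real.sqrt 3 * α))
    (ε : ℝ) (hε : 0 < ε) (hεlt : ε < min α (1 / (3 * C₁)))
    (hA1 : ∀ x ∈ M, ∀ y ∈ M, intrinsicDist M x y < α →
      dist x y ≤ intrinsicDist M x y ∧
      intrinsicDist M x y ≤ (1 + C₁ * dist x y) * dist x y) :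
    (∀ A : Set (E n → E n), (∀ g ∈ A, ContinuousOn g M) →
      (∃ b : E n, (fun x => x + b) ∈ A) →
      ∀ f ∈ A, (∀ g ∈ A, Ffun M M ε f ≤ Ffun M M ε g) →
      ∀ x ∈ M, ∀ y ∈ M, intrinsicDist M x y < ε →
        (1 - 3 * C₁ * ε) * intrinsicDist M x y ≤ ‖f x - f y‖ ∧
        ‖f x - f y‖ ≤ (1 + 3 * C₁ * ε) * intrinsicDist M x y) ∧
    (∀ Sk : Set (E n), IsClosed Sk → Sk ⊆ M →
      ∀ A : Set (E n → E n), (∀ g ∈ A, ContinuousOn g M) →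
      (∃ b : E n, (fun x => x + b) ∈ A) →
      ∀ f ∈ A, (∀ g ∈ A, Ffun M Sk ε f ≤ Ffun M Sk ε g) →
      ∀ x ∈ Sk, ∀ y ∈ Sk, intrinsicDist M x y < ε →
        (1 - 3 * C₁ * ε) * intrinsicDist M x y ≤ ‖f x - f y‖ ∧
        ‖f x - f y‖ ≤ (1 + 3 * C₁ * ε) * intrinsicDist M x y) := by
  have hsqrt3 : (0:ℝ) < Real.sqrt 3 := Real.sqrt_pos.mpr (by norm_num)
  have hC₁pos : 0 < C₁ := by rw [hC₁]; positivity
  have hεα : ε < α := hεlt.trans_le (min_le_left _ _)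
  have hεC : ε < 1 / (3 * C₁) := hεlt.trans_le (min_le_right _ _)
  exact ⟨key_lemma M M subset_rfl α C₁ ε hC₁pos hε hεα hεC hA1,
    fun Sk _ hSk => key_lemma M Sk hSk α C₁ ε hC₁pos hε hεα hεC hA1⟩
end
end

section
/- Let f : M → ℝⁿ satisfy: (H1) |f(x) − f(y)| ≥ C₂·d_M(x,y) for all x, y ∈ M, and (H2) |f(x) − f(y)| ≤ (1 + C₁·d_M(x,y))·d_M(x,y) whenever d_M(x,y) ≤ ε. Let 0 < σ ≤ C₂·α and let σ″ > 0 satisfy (1 + C₁σ″/C₂)·(σ″/C₂) = σ with σ″ ≤ C₂·ε; set σ′ := (1 + C₁σ/C₂)·(σ/C₂). Let {Ȳ_λ}_{λ∈Λ} be a finite family of points of M and X̄_λ := f(Ȳ_λ), Σ := f(M). Then for every subset S ⊆ Λ: (i) if there exists Y ∈ M with |Y − Ȳ_λ| < σ″ for all λ ∈ S, then there exists X ∈ Σ with |X − X̄_λ| < σ for all λ ∈ S; and (ii) if there exists X ∈ Σ with |X − X̄_λ| < σ for all λ ∈ S, then there exists Y ∈ M with |Y − Ȳ_λ| < σ′ for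 all λ ∈ S. Equivalently, for the Čech (nerve) complexes of these ball families one has C_M(σ″) ⊆ C_Σ(σ) ⊆ C_M(σ′). -/
open Set Metric Filter Topology ENNReal

noncomputable section

/-- Čech complex comparison: under the hypotheses `(H1)`, `(H2)` on `f` and with
`0 < σ ≤ C₂·α`, `σ″ > 0` solving `(1 + C₁σ″/C₂)·(σ″/C₂) = σ`, `σ″ ≤ C₂·ε`, and
`σ′ := (1 + C₁σ/C₂)·(σ/C₂)`, for every finite family `{Ȳ_λ} ⊆ M`, `X̄_λ := f(Ȳ_λ)`,
`Σ := f(M)` and every index set `S`: (i) if the balls `B_{σ″}(Ȳ_λ)`, `λ ∈ S`, have a common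
point in `M`, then the balls `B_σ(X̄_λ)`, `λ ∈ S`, have a common point in `Σ`; and (ii) if the
balls `B_σ(X̄_λ)`, `λ ∈ S`, have a common point in `Σ`, then the balls `B_{σ′}(Ȳ_λ)`, `λ ∈ S`,
have a common point in `M`. Equivalently, `C_M(σ″) ⊆ C_Σ(σ) ⊆ C_M(σ′)` as nerve complexes.
The equivalence of the intrinsic and Euclidean distances on `M`, valid in this setting,
is recorded as the hypotheses `hup`, `hlow`. -/
theorem cech_complex_comparison {n : ℕ} (M : Set (E n))
    (hsm : IsSmoothSubmanifold M) (hconn : IsConnected M) (hcomp : IsCompact M)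
    (α : ℝ) (hα : α = reach M) (hαpos : 0 < α)
    (D : ℝ) (hD : D = sSup {r : ℝ | ∃ u ∈ M, ∃ v ∈ M, r = intrinsicDist M u v})
    (C₁ C₂ : ℝ) (hC₁ : C₁ = 1 / (3 * Real.sqrt 3 * α))
    (hC₂ : C₂ = min (2 / Real.pi) (2 * α / D))
    (ε : ℝ) (hε : 0 < ε)
    (hup : ∀ u ∈ M, ∀ v ∈ M, dist u v ≤ intrinsicDist M u v)
    (hlow : ∀ u ∈ M, ∀ v ∈ M, C₂ * intrinsicDist M u v ≤ dist u v)
    (f : E n → E n)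
    (H1 : ∀ x ∈ M, ∀ y ∈ M, C₂ * intrinsicDist M x y ≤ ‖f x - f y‖)
    (H2 : ∀ x ∈ M, ∀ y ∈ M, intrinsicDist M x y ≤ ε →
      ‖f x - f y‖ ≤ (1 + C₁ * intrinsicDist M x y) * intrinsicDist M x y)
    (σ σ'' : ℝ) (hσ0 : 0 < σ) (hσ : σ ≤ C₂ * α)
    (hσ''0 : 0 < σ'') (hσ''eq : (1 + C₁ * σ'' / C₂) * (σ'' / C₂) = σ) (hσ''ε : σ'' ≤ C₂ * ε)
    (Λ : Type) [Fintype Λ] (Ybar : Λ → E n) (hYbar : ∀ l, Ybar l ∈ M) :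
    ∀ S : Set Λ,
      ((∃ Y ∈ M, ∀ l ∈ S, ‖Y - Ybar l‖ < σ'') →
        ∃ X ∈ f '' M, ∀ l ∈ S, ‖X - f (Ybar l)‖ < σ) ∧
      ((∃ X ∈ f '' M, ∀ l ∈ S, ‖X - f (Ybar l)‖ < σ) →
        ∃ Y ∈ M, ∀ l ∈ S, ‖Y - Ybar l‖ < (1 + C₁ * σ / C₂) * (σ / C₂)) := by
  have hC₁0 : 0 < C₁ := by
    rw [hC₁]
    have h3 : (0:ℝ) < Real.sqrt 3 := Real.sqrt_pos.mpr (by norm_num)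
    positivity
  have hC₂0 : 0 < C₂ := by
    rcases lt_or_ge 0 C₂ with h | h
    · exact h
    · exfalso
      have hD0 : 0 ≤ D := by
        rw [hD]
        apply Real.sSup_nonneg
        rintro x ⟨u, hu, v, hv, rfl⟩
        exact ENNReal.toReal_nonneg
      have h2 : 0 ≤ C₂ := by
        rw [hC₂]
        refine le_min (by positivity) (div_nonneg (by linarith) hD0)
      have hz : C₂ = 0 := le_antisymm h h2
      rw [hz] at hσ''eq
      simp [div_zero] at hσ''eq
      linarith
  intro S
  constructor
  · rintro ⟨Y, hY, hYl⟩
    refine ⟨f Y, ⟨Y, hY, rfl⟩, fun l hl => ?_⟩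
    set d := intrinsicDist M Y (Ybar l) with hdd
    have hd0 : 0 ≤ d := ENNReal.toReal_nonneg
    have hle : C₂ * d ≤ ‖Y - Ybar l‖ := by
      have := hlow Y hY (Ybar l) (hYbar l)
      rwa [dist_eq_norm] at this
    have hdlt : d < σ'' / C₂ := by
      rw [lt_div_iff₀ hC₂0]
      calc d * C₂ = C₂ * d := mul_comm _ _
        _ ≤ ‖Y - Ybar l‖ := hle
        _ < σ'' := hYl l hl
    have hdε : d ≤ ε := by
      have : σ'' / C₂ ≤ ε := by rw [div_le_iff₀ hC₂0]; linarith [hσ''ε]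
      linarith
    have hH2 := H2 Y hY (Ybar l) (hYbar l) hdε
    have hstrict : (1 + C₁ * d) * d < (1 + C₁ * σ'' / C₂) * (σ'' / C₂) := by
      have ht0 : 0 < σ'' / C₂ := div_pos hσ''0 hC₂0
      have hrw : C₁ * σ'' / C₂ = C₁ * (σ'' / C₂) := by ring
      rw [hrw]
      have key : 0 < (σ'' / C₂ - d) * (1 + C₁ * (σ'' / C₂ + d)) := by
        apply _root_.mul_pos (by linarith)
        nlinarith
      nlinarith [key]
    calc ‖f Y - f (Ybar l)‖ ≤ (1 + C₁ * d) * d := hH2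
      _ < (1 + C₁ * σ'' / C₂) * (σ'' / C₂) := hstrict
      _ = σ := hσ''eq
  · rintro ⟨X, ⟨Y, hY, rfl⟩, hXl⟩
    refine ⟨Y, hY, fun l hl => ?_⟩
    set d := intrinsicDist M Y (Ybar l) with hdd
    have hd0 : 0 ≤ d := ENNReal.toReal_nonneg
    have hle : C₂ * d ≤ ‖f Y - f (Ybar l)‖ := H1 Y hY (Ybar l) (hYbar l)
    have hdlt : d < σ / C₂ := by
      rw [lt_div_iff₀ hC₂0]
      calc d * C₂ = C₂ * d := mul_comm _ _
        _ ≤ ‖f Y - f (Ybar l)‖ := hle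
        _ < σ := hXl l hl
    have hYd : ‖Y - Ybar l‖ ≤ d := by
      have := hup Y hY (Ybar l) (hYbar l)
      rwa [dist_eq_norm] at this
    have ht0 : 0 < σ / C₂ := div_pos hσ0 hC₂0
    have hrw : C₁ * σ / C₂ = C₁ * (σ / C₂) := by ring
    calc ‖Y - Ybar l‖ ≤ d := hYd
      _ < σ / C₂ := hdlt
      _ ≤ (1 + C₁ * σ / C₂) * (σ / C₂) := by
          rw [hrw]; nlinarith [mul_pos hC₁0 ht0]
end
end

section
/- Let α > 0 and let e, d be real numbers with 0 < e ≤ d < α and d ≤ 2α·arcsin(e/(2α)). Then d/e − 1 ≤ e/(3√3·α). -/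
open Real

/- Put `t = d / (2α) ∈ (0, 1)`. The hypothesis on `d` says `t ≤ arcsin (e / (2α))`, i.e.
`2α sin t ≤ e`, so `d - e ≤ 2α (t - sin t)`. The claim then follows from the elementary bound
`3√3 (t - sin t) ≤ 2 sin² t`, which comes from `t - t³/6 < sin t`. -/

theorem three_mul_sqrt_three_mul_sub_sin_le {t : ℝ} (ht0 : 0 < t) (ht1 : t ≤ 1) :
    3 * √3 * (t - sin t) ≤ 2 * sin t ^ 2 := by
  have hcube : t - t ^ 3 / 6 < sin t := sin_gt_sub_cube ht0
  have hsqrt : √3 ≤ 2 := by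
    rw [sqrt_le_left (by norm_num)]; norm_num
  have ht_cube : t ^ 3 ≤ t ^ 1 := pow_le_pow_of_le_one ht0.le ht1 (by norm_num)
  have hlow : 5 / 6 * t ≤ sin t := by linarith
  calc 3 * √3 * (t - sin t) ≤ 3 * √3 * (t ^ 3 / 6) := by gcongr; linarith
    _ ≤ 3 * 2 * (t ^ 3 / 6) := by gcongr
    _ ≤ 2 * (5 / 6 * t) ^ 2 := by nlinarith
    _ ≤ 2 * sin t ^ 2 := by gcongr

/-- Let `α > 0` and let `e, d` be real numbers with `0 < e ≤ d < α` and
`d ≤ 2α·arcsin(e/(2α))`. Then `d/e − 1 ≤ e/(3√3·α)`. -/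
theorem ratio_sub_one_le (α e d : ℝ) (hα : 0 < α) (he : 0 < e) (hed : e ≤ d)
    (hdα : d < α) (h : d ≤ 2 * α * Real.arcsin (e / (2 * α))) :
    d / e - 1 ≤ e / (3 * Real.sqrt 3 * α) := by
  set t := d / (2 * α)
  have hd : d = 2 * α * t := by simp only [t]; field_simp
  have ht0 : 0 < t := div_pos (he.trans_le hed) (by positivity)
  have ht1 : t ≤ 1 := by rw [div_le_iff₀ (by positivity)]; linarith
  have hsin : 2 * α * sin t ≤ e := by
    have : t ≤ arcsin (e / (2 * α)) := by rw [div_le_iff₀' (by positivity)]; exact h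
    rw [le_arcsin_iff_sin_le' ⟨by linarith [pi_gt_three], by linarith [pi_gt_three]⟩,
      le_div_iff₀' (by positivity)] at this
    exact this
  have hsin0 : 0 ≤ sin t := sin_nonneg_of_nonneg_of_le_pi ht0.le (by linarith [pi_gt_three])
  rw [div_sub_one he.ne', div_le_div_iff₀ he (by positivity)]
  calc (d - e) * (3 * √3 * α) ≤ (2 * α * t - 2 * α * sin t) * (3 * √3 * α) := by
        gcongr; linarith
    _ = 2 * α ^ 2 * (3 * √3 * (t - sin t)) := by ring
    _ ≤ 2 * α ^ 2 * (2 * sin t ^ 2) := by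
        gcongr 2 * α ^ 2 * ?_; exact three_mul_sqrt_three_mul_sub_sin_le ht0 ht1
    _ = (2 * α * sin t) ^ 2 := by ring
    _ ≤ e * e := by rw [← sq]; gcongr
end

section
/- Let S¹ := {u ∈ ℝ² : |u| = 1} be the unit circle, equipped with its geodesic distance d_{S¹}(u,v) := arccos(u·v). For every n ∈ ℕ and every ε > 0, there exists no function f : S¹ → ℝⁿ such that |f(u) − f(v)| = d_{S¹}(u,v) for all u, v ∈ S¹ with d_{S¹}(u,v) < ε. -/
/-!
Sample `f` at the angles `k δ` with `δ = 2π / N` small. Consecutive samples are at distance `δ`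
and samples two steps apart at distance `2 δ`, so by strict convexity each sample is the midpoint
of its neighbours: the samples form an arithmetic progression with nonzero step, which cannot
return to its starting point after the `N` steps that go once around the circle.
-/

open Real

section StrictConvex

variable {E : Type*} [NormedAddCommGroup E] [NormedSpace ℝ E] [StrictConvexSpace ℝ E]
  {g : ℕ → E} {δ : ℝ}

theorem sub_succ_eq_sub_one_zero (h₁ : ∀ k, ‖g (k + 1) - g k‖ = δ)
    (h₂ : ∀ k, ‖g (k + 2) - g k‖ = 2 * δ) (k : ℕ) : g (k + 1) - g k = g 1 - g 0 := by
  induction k with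
  | zero => rfl
  | succ k ih =>
    rw [← ih]
    refine eq_of_norm_eq_of_norm_add_eq (by rw [h₁, h₁]) ?_
    rw [sub_add_sub_cancel, h₂, h₁, h₁, two_mul]

theorem eq_zero_of_apply_eq_apply_zero (h₁ : ∀ k, ‖g (k + 1) - g k‖ = δ)
    (h₂ : ∀ k, ‖g (k + 2) - g k‖ = 2 * δ) {N : ℕ} (hN : N ≠ 0) (hg : g N = g 0) :
    δ = 0 := by
  have hsum : g N - g 0 = N • (g 1 - g 0) := by
    rw [← Finset.sum_range_sub,
      Finset.sum_congr rfl fun k _ => sub_succ_eq_sub_one_zero h₁ h₂ k, Finset.sum_const,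
      Finset.card_range]
  rw [hg, sub_self, eq_comm, ← Nat.cast_smul_eq_nsmul ℝ, smul_eq_zero, Nat.cast_eq_zero,
    sub_eq_zero] at hsum
  rw [← h₁ 0, zero_add, hsum.resolve_left hN, sub_self, norm_zero]

end StrictConvex

local notation "S¹" => Metric.sphere (0 : EuclideanSpace ℝ (Fin 2)) 1

noncomputable def circlePoint (θ : ℝ) : S¹ :=
  ⟨!₂[cos θ, sin θ], by simp [EuclideanSpace.norm_eq]⟩

theorem inner_circlePoint (a b : ℝ) :
    inner ℝ (circlePoint a : EuclideanSpace ℝ (Fin 2)) (circlePoint b) = cos (a - b) := by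
  simp only [circlePoint, PiLp.inner_apply, RCLike.inner_apply, ringHom_apply, Fin.sum_univ_two,
    Matrix.cons_val_zero, Matrix.cons_val_one, Matrix.cons_val_fin_one, cos_sub]
  ring

theorem circlePoint_two_pi : circlePoint (2 * π) = circlePoint 0 := by
  simp [circlePoint]

theorem arccos_inner_circlePoint_add {a d : ℝ} (h₀ : 0 ≤ d) (hπ : d ≤ π) :
    arccos (inner ℝ (circlePoint a : EuclideanSpace ℝ (Fin 2)) (circlePoint (a + d))) = d := by
  rw [inner_circlePoint, sub_add_cancel_left, cos_neg, arccos_cos h₀ hπ]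

theorem norm_sub_circlePoint {E : Type*} [SeminormedAddCommGroup E] {ε : ℝ} {f : S¹ → E}
    (hf : ∀ u v : S¹, arccos (inner ℝ (u : EuclideanSpace ℝ (Fin 2)) v) < ε →
      ‖f u - f v‖ = arccos (inner ℝ (u : EuclideanSpace ℝ (Fin 2)) v))
    {a d : ℝ} (h₀ : 0 ≤ d) (hπ : d ≤ π) (hε : d < ε) :
    ‖f (circlePoint (a + d)) - f (circlePoint a)‖ = d := by
  rw [norm_sub_rev, hf _ _ (by rwa [arccos_inner_circlePoint_add h₀ hπ]),
    arccos_inner_circlePoint_add h₀ hπ]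

/-- On the unit circle `S¹ ⊆ ℝ²` with geodesic distance `d_{S¹}(u,v) = arccos(u·v)`:
for every `n` and every `ε > 0` there is no map `f : S¹ → ℝⁿ` with
`|f(u) − f(v)| = d_{S¹}(u,v)` whenever `d_{S¹}(u,v) < ε`. -/
theorem no_local_isometry_of_circle (n : ℕ) (ε : ℝ) (hε : 0 < ε) :
    ¬ ∃ f : (Metric.sphere (0 : EuclideanSpace ℝ (Fin 2)) 1) → EuclideanSpace ℝ (Fin n),
      ∀ u v : (Metric.sphere (0 : EuclideanSpace ℝ (Fin 2)) 1),
        Real.arccos (inner ℝ (u : EuclideanSpace ℝ (Fin 2)) (v : EuclideanSpace ℝ (Fin 2))) < ε →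
        ‖f u - f v‖ =
          Real.arccos (inner ℝ (u : EuclideanSpace ℝ (Fin 2)) (v : EuclideanSpace ℝ (Fin 2))) := by
  rintro ⟨f, hf⟩
  obtain ⟨N, hN⟩ := exists_nat_gt (max 4 (4 * π / ε))
  have hN₄ : 4 < (N : ℝ) := (le_max_left _ _).trans_lt hN
  have hNε : 4 * π < N * ε := (div_lt_iff₀ hε).mp ((le_max_right _ _).trans_lt hN)
  set δ := 2 * π / N
  have hNδ : N * δ = 2 * π := mul_div_cancel₀ _ (by positivity)
  have hδ : 0 < δ := by positivity
  have hδπ : 2 * δ ≤ π := by nlinarith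
  have hδε : 2 * δ < ε := by nlinarith
  have step (m : ℕ) (hm : (m : ℝ) ≤ 2) (k : ℕ) :
      ‖f (circlePoint ((k + m : ℕ) * δ)) - f (circlePoint (k * δ))‖ = m * δ := by
    rw [Nat.cast_add, add_mul]
    exact norm_sub_circlePoint hf (by positivity) (by nlinarith) (by nlinarith)
  refine hδ.ne' (eq_zero_of_apply_eq_apply_zero (g := fun k : ℕ => f (circlePoint (k * δ)))
    (fun k => by simpa using step 1 (by norm_num) k)
    (fun k => by simpa using step 2 (by norm_num) k)
    (N := N) (by rintro rfl; norm_num at hN₄) ?_)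
  simp only [hNδ, circlePoint_two_pi, CharP.cast_eq_zero, zero_mul]
end
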